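/- arXiv:1107.5175 — 9 statements merged into one kernel-verified Lean document; each statement's English description precedes it below -/
import Mathlib

section
/- Let G = SL₃(ℂ) and let H ⊆ G be the subgroup of all matrices of the form [[t,0,a],[0,1,b],[0,0,t⁻¹]] with t ∈ ℂˣ and a,b ∈ ℂ. Then the normalizer N_G(H) of H in G equals the subgroup K of all matrices of the form [[t₁,0,a],[0,t₂,b],[0,0,t₃]] with a,b ∈ ℂ and t₁t₂t₃ = 1. -/
/-!
The matrices of `H` are exactly the elements of `SL₃(ℂ)` that fix `e₁` and have `e₀` as an
eigenvector; those of `K` are the ones having both `e₀` and `e₁` as eigenvectors. Conjugation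
by an element of `K` preserves the conditions defining `H`. Conversely, if `g` normalizes `H`,
then `g e₁` is fixed by all of `H` and `g e₀` is a common eigenvector of `H`. Testing against
`diag(2, 1, 1/2)` and the transvection `e₂ ↦ e₂ + e₀` puts `g e₁` in `ℂ e₁` and `g e₀` in
`ℂ e₀ ∪ ℂ e₁`, and `det g ≠ 0` rules out `g e₀ ∈ ℂ e₁`.
-/

open Matrix

section Eigenvectors

variable {G R V : Type*} [Group G] [Field R] [AddCommGroup V] [Module R V]
  [DistribMulAction G V] [SMulCommClass G R V]

theorem inv_smul_eq_inv_smul_of_smul_eq_smul {g : G} {v : V} {a : R} (ha : a ≠ 0)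
    (hg : g • v = a • v) : g⁻¹ • v = a⁻¹ • v := by
  rw [inv_smul_eq_iff, smul_comm, hg, inv_smul_smul₀ ha]

theorem conj_smul_eq_smul_of_smul_eq_smul {g h : G} {v : V} {a c : R}
    (hg : g • v = a • v) (hh : h • v = c • v) : (g * h * g⁻¹) • v = c • v := by
  rcases eq_or_ne a 0 with rfl | ha
  · rw [zero_smul, smul_eq_zero_iff_eq] at hg
    simp [hg]
  · rw [mul_smul, mul_smul, inv_smul_eq_inv_smul_of_smul_eq_smul ha hg, smul_comm h, hh,
      smul_comm g a⁻¹, smul_comm g c, hg, smul_comm c, inv_smul_smul₀ ha]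

end Eigenvectors

namespace Subgroup

variable {G : Type*} [Group G] {H : Subgroup G} {g : G}

theorem smul_eq_self_of_mem_normalizer {α : Type*} [MulAction G α] (hg : g ∈ normalizer H)
    {x : α} (hx : ∀ h ∈ H, h • x = x) : ∀ h ∈ H, h • g • x = g • x := by
  intro h hh
  calc h • g • x = g • (g⁻¹ * h * g) • x := by simp [mul_smul]
    _ = g • x := by rw [hx _ ((mem_normalizer_iff''.1 hg h).1 hh)]

theorem exists_smul_eq_smul_of_mem_normalizer {R V : Type*} [MulAction G V] [SMul R V]
    [SMulCommClass G R V] (hg : g ∈ normalizer H) {v : V}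
    (hv : ∀ h ∈ H, ∃ c : R, h • v = c • v) : ∀ h ∈ H, ∃ c : R, h • g • v = c • g • v := by
  intro h hh
  obtain ⟨c, hc⟩ := hv _ ((mem_normalizer_iff''.1 hg h).1 hh)
  refine ⟨c, ?_⟩
  calc h • g • v = g • (g⁻¹ * h * g) • v := by simp [mul_smul]
    _ = c • g • v := by rw [hc, smul_comm]

end Subgroup

namespace Matrix

variable {n K : Type*} [Fintype n] [DecidableEq n] [Field K]

theorem SpecialLinearGroup.smul_single_one {R : Type*} [CommRing R]
    (g : SpecialLinearGroup n R) (j : n) :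
    g • (Pi.single j 1 : n → R) = (g : Matrix n n R).col j := by
  rw [SpecialLinearGroup.smul_def, smul_eq_mulVec, mulVec_single_one]

theorem eq_zero_of_diagonal_mulVec_eq_smul {D v : n → K} {c : K} (h : diagonal D *ᵥ v = c • v)
    {i : n} (hi : D i ≠ c) : v i = 0 := by
  have hv := congrFun h i
  simp only [mulVec_diagonal, Pi.smul_apply, smul_eq_mul, mul_eq_mul_right_iff] at hv
  exact hv.resolve_left hi

namespace SpecialLinearGroup

theorem eq_zero_of_transvection_smul_eq_smul {i j : n} (hij : i ≠ j) {b : K} (hb : b ≠ 0)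
    {v : n → K} {c : K} (h : transvection hij b • v = c • v) : v j = 0 := by
  have hi : v i + b * v j = c * v i := by
    simpa [SpecialLinearGroup.smul_def, transvection_coe, add_mulVec, single_mulVec_eq]
      using congrFun h i
  have hj : v j = c * v j := by
    simpa [SpecialLinearGroup.smul_def, transvection_coe, add_mulVec, single_mulVec_eq, hij.symm]
      using congrFun h j
  have : b * v j ^ 2 = 0 := by linear_combination v j * hi - v i * hj
  simpa [hb] using this

end SpecialLinearGroup

end Matrix

local notation "e₀" => (Pi.single 0 1 : Fin 3 → ℂ)
local notation "e₁" => (Pi.single 1 1 : Fin 3 → ℂ)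

theorem smul_e₀_eq_smul_iff (g : SpecialLinearGroup (Fin 3) ℂ) (c : ℂ) :
    g • e₀ = c • e₀ ↔ g 0 0 = c ∧ g 1 0 = 0 ∧ g 2 0 = 0 := by
  simp [SpecialLinearGroup.smul_single_one, funext_iff, Fin.forall_fin_succ, Pi.single_apply]

theorem smul_e₁_eq_smul_iff (g : SpecialLinearGroup (Fin 3) ℂ) (c : ℂ) :
    g • e₁ = c • e₁ ↔ g 0 1 = 0 ∧ g 1 1 = c ∧ g 2 1 = 0 := by
  simp [SpecialLinearGroup.smul_single_one, funext_iff, Fin.forall_fin_succ, Pi.single_apply]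

theorem exists_coe_eq_H_matrix_iff (g : SpecialLinearGroup (Fin 3) ℂ) :
    (∃ (t : ℂˣ) (a b : ℂ),
      (g : Matrix (Fin 3) (Fin 3) ℂ) = !![(t : ℂ), 0, a; 0, 1, b; 0, 0, (t : ℂ)⁻¹]) ↔
    (∃ c : ℂ, g • e₀ = c • e₀) ∧ g • e₁ = e₁ := by
  have fixes_e₁ := smul_e₁_eq_smul_iff g 1
  rw [one_smul] at fixes_e₁
  simp only [smul_e₀_eq_smul_iff, fixes_e₁]
  constructor
  · rintro ⟨t, a, b, hg⟩
    simp [hg]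
  · rintro ⟨⟨c, h00, h10, h20⟩, h01, h11, h21⟩
    have hdet := g.det_coe
    rw [det_fin_three, h00, h10, h20, h01, h11, h21] at hdet
    have h22 : g 2 2 = c⁻¹ := eq_inv_of_mul_eq_one_right (by linear_combination hdet)
    refine ⟨Units.mk0 c (fun hc => by simp [hc] at hdet), g 0 2, g 1 2, ?_⟩
    ext i j
    fin_cases i <;> fin_cases j <;> simp [h00, h10, h20, h01, h11, h21, h22]

theorem exists_coe_eq_K_matrix_iff (g : SpecialLinearGroup (Fin 3) ℂ) :
    (∃ (t₁ t₂ t₃ a b : ℂ), t₁ * t₂ * t₃ = 1 ∧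
      (g : Matrix (Fin 3) (Fin 3) ℂ) = !![t₁, 0, a; 0, t₂, b; 0, 0, t₃]) ↔
    (∃ c : ℂ, g • e₀ = c • e₀) ∧ ∃ c : ℂ, g • e₁ = c • e₁ := by
  simp only [smul_e₀_eq_smul_iff, smul_e₁_eq_smul_iff]
  constructor
  · rintro ⟨t₁, t₂, t₃, a, b, -, hg⟩
    simp [hg]
  · rintro ⟨⟨_, -, h10, h20⟩, _, h01, -, h21⟩
    refine ⟨g 0 0, g 1 1, g 2 2, g 0 2, g 1 2, ?_, ?_⟩
    · have hdet := g.det_coe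
      rw [det_fin_three, h10, h20, h01, h21] at hdet
      linear_combination hdet
    · ext i j
      fin_cases i <;> fin_cases j <;> simp [h10, h20, h01, h21]

noncomputable def diagTwo : SpecialLinearGroup (Fin 3) ℂ :=
  ⟨diagonal ![2, 1, 2⁻¹], by simp [det_diagonal, Fin.prod_univ_three]⟩

abbrev transvection₀₂ : SpecialLinearGroup (Fin 3) ℂ :=
  SpecialLinearGroup.transvection (show (0 : Fin 3) ≠ 2 by decide) 1

theorem diagTwo_smul_e₀ : diagTwo • e₀ = (2 : ℂ) • e₀ :=
  (smul_e₀_eq_smul_iff _ 2).2 (by simp [diagTwo])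

theorem diagTwo_smul_e₁ : diagTwo • e₁ = e₁ := by
  simpa using (smul_e₁_eq_smul_iff diagTwo 1).2 (by simp [diagTwo])

theorem transvection₀₂_smul_e₀ : transvection₀₂ • e₀ = e₀ :=
  SpecialLinearGroup.transvection_smul_single_fst _ _

theorem transvection₀₂_smul_e₁ : transvection₀₂ • e₁ = e₁ := by
  simpa using (smul_e₁_eq_smul_iff transvection₀₂ 1).2
    (by simp [SpecialLinearGroup.transvection_coe])

theorem diagTwo_smul (v : Fin 3 → ℂ) : diagTwo • v = diagonal ![2, 1, 2⁻¹] *ᵥ v := rfl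

theorem eq_zero_of_diagTwo_smul_eq_self {w : Fin 3 → ℂ} (h : diagTwo • w = w) :
    w 0 = 0 ∧ w 2 = 0 := by
  have h' : diagonal ![2, 1, 2⁻¹] *ᵥ w = (1 : ℂ) • w := by rw [one_smul, ← diagTwo_smul, h]
  exact ⟨eq_zero_of_diagonal_mulVec_eq_smul h' (i := 0) (by simp),
    eq_zero_of_diagonal_mulVec_eq_smul h' (i := 2) (by simp)⟩

theorem eq_zero_of_diagTwo_transvection₀₂_eigenvector {w : Fin 3 → ℂ} {c c' : ℂ}
    (hd : diagTwo • w = c • w) (hu : transvection₀₂ • w = c' • w) :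
    w 2 = 0 ∧ (w 0 = 0 ∨ w 1 = 0) := by
  refine ⟨SpecialLinearGroup.eq_zero_of_transvection_smul_eq_smul _ one_ne_zero hu, ?_⟩
  rw [diagTwo_smul] at hd
  rw [or_iff_not_imp_right]
  intro h1
  have hc : c = 1 := by
    by_contra hc
    exact h1 (eq_zero_of_diagonal_mulVec_eq_smul hd (i := 1) (Ne.symm hc))
  exact eq_zero_of_diagonal_mulVec_eq_smul hd (i := 0) (by simp [hc])

theorem preserves_lines_e₀_e₁_of_eigen (g : SpecialLinearGroup (Fin 3) ℂ)
    (hfix : diagTwo • g • e₁ = g • e₁) (hd : ∃ c : ℂ, diagTwo • g • e₀ = c • g • e₀)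
    (hu : ∃ c : ℂ, transvection₀₂ • g • e₀ = c • g • e₀) :
    (∃ c : ℂ, g • e₀ = c • e₀) ∧ ∃ c : ℂ, g • e₁ = c • e₁ := by
  obtain ⟨c, hd⟩ := hd
  obtain ⟨c', hu⟩ := hu
  obtain ⟨h01, h21⟩ := eq_zero_of_diagTwo_smul_eq_self hfix
  obtain ⟨h20, h00_or_h10⟩ := eq_zero_of_diagTwo_transvection₀₂_eigenvector hd hu
  simp only [SpecialLinearGroup.smul_single_one, col_apply] at h01 h21 h20 h00_or_h10
  have h10 : g 1 0 = 0 := by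
    refine h00_or_h10.resolve_left fun h00 => ?_
    have hdet := g.det_coe
    rw [det_fin_three, h00, h20, h01, h21] at hdet
    simp at hdet
  exact ⟨⟨g 0 0, (smul_e₀_eq_smul_iff g _).2 ⟨rfl, h10, h20⟩⟩,
    ⟨g 1 1, (smul_e₁_eq_smul_iff g _).2 ⟨h01, rfl, h21⟩⟩⟩

/-- For `G = SL₃(ℂ)`, the normalizer of the subgroup `H` of matrices
`[[t,0,a],[0,1,b],[0,0,t⁻¹]]` (with `t ∈ ℂˣ`, `a, b ∈ ℂ`) equals the subgroup `K` of matrices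
`[[t₁,0,a],[0,t₂,b],[0,0,t₃]]` with `t₁t₂t₃ = 1`. -/
theorem normalizer_of_H_eq_K
    (H K : Subgroup (Matrix.SpecialLinearGroup (Fin 3) ℂ))
    (hH : ∀ g : Matrix.SpecialLinearGroup (Fin 3) ℂ, g ∈ H ↔
      ∃ (t : ℂˣ) (a b : ℂ),
        (g : Matrix (Fin 3) (Fin 3) ℂ) = !![(t : ℂ), 0, a; 0, 1, b; 0, 0, (t : ℂ)⁻¹])
    (hK : ∀ g : Matrix.SpecialLinearGroup (Fin 3) ℂ, g ∈ K ↔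
      ∃ (t₁ t₂ t₃ a b : ℂ), t₁ * t₂ * t₃ = 1 ∧
        (g : Matrix (Fin 3) (Fin 3) ℂ) = !![t₁, 0, a; 0, t₂, b; 0, 0, t₃]) :
    Subgroup.normalizer (H : Set (Matrix.SpecialLinearGroup (Fin 3) ℂ)) = K := by
  have hH' : ∀ h, h ∈ H ↔ (∃ c : ℂ, h • e₀ = c • e₀) ∧ h • e₁ = e₁ :=
    fun h => (hH h).trans (exists_coe_eq_H_matrix_iff h)
  have hK' : ∀ g, g ∈ K ↔ (∃ c : ℂ, g • e₀ = c • e₀) ∧ ∃ c : ℂ, g • e₁ = c • e₁ :=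
    fun g => (hK g).trans (exists_coe_eq_K_matrix_iff g)
  apply le_antisymm
  · intro g hg
    have fixed := Subgroup.smul_eq_self_of_mem_normalizer hg fun h hh => ((hH' h).1 hh).2
    have eigen := Subgroup.exists_smul_eq_smul_of_mem_normalizer hg fun h hh => ((hH' h).1 hh).1
    have hdiag : diagTwo ∈ H := (hH' _).2 ⟨⟨2, diagTwo_smul_e₀⟩, diagTwo_smul_e₁⟩
    have htrans : transvection₀₂ ∈ H :=
      (hH' _).2 ⟨⟨1, by rw [one_smul, transvection₀₂_smul_e₀]⟩, transvection₀₂_smul_e₁⟩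
    exact (hK' g).2
      (preserves_lines_e₀_e₁_of_eigen g (fixed _ hdiag) (eigen _ hdiag) (eigen _ htrans))
  · rw [Subgroup.le_set_normalizer_iff]
    intro g hg h hh
    obtain ⟨⟨a, ha⟩, b, hb⟩ := (hK' g).1 hg
    obtain ⟨⟨c, hc⟩, hh₁⟩ := (hH' h).1 hh
    have hh₁' : h • e₁ = (1 : ℂ) • e₁ := by rw [one_smul, hh₁]
    refine (hH' _).2 ⟨⟨c, conj_smul_eq_smul_of_smul_eq_smul ha hc⟩, ?_⟩
    simpa using conj_smul_eq_smul_of_smul_eq_smul hb hh₁'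
end

section
/- Let G = SL₃(ℂ) and let K ⊆ G be the subgroup of all matrices of the form [[t₁,0,a],[0,t₂,b],[0,0,t₃]] with a,b ∈ ℂ and t₁t₂t₃ = 1. Then the normalizer N_G(K) equals K ∪ ρK, where ρ = [[0,1,0],[1,0,0],[0,0,−1]]. -/
/-!
The matrix `k = [[-1,0,1],[0,1,0],[0,0,-1]]` lies in `K`, and its eigenvectors are
exactly the nonzero multiples of `e₀` and of `e₁` (the Jordan block on `⟨e₀, e₂⟩` contributes no
further eigenvector). If `g` normalizes `K` then `k g = g h` with `h = g⁻¹ k g ∈ K`, and since `h`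
maps `e₀`, `e₁` to multiples of themselves, `g e₀` and `g e₁` are eigenvectors of `k`, hence lie
on the axes `ℂ e₀ ∪ ℂ e₁`. As `det g ≠ 0` they lie on different axes: either `g ∈ K`, or `g`
swaps the two axes and `ρ g ∈ K`.
-/

open Subgroup
open scoped Matrix MatrixGroups

variable {R : Type*} [CommRing R]

def PreservesFirstTwoAxes (M : Matrix (Fin 3) (Fin 3) R) : Prop :=
  M 1 0 = 0 ∧ M 2 0 = 0 ∧ M 0 1 = 0 ∧ M 2 1 = 0

lemma exists_eq_upper_iff_preservesFirstTwoAxes {M : Matrix (Fin 3) (Fin 3) R}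
    (hM : M.det = 1) :
    (∃ t₁ t₂ t₃ a b : R, t₁ * t₂ * t₃ = 1 ∧ M = !![t₁, 0, a; 0, t₂, b; 0, 0, t₃]) ↔
      PreservesFirstTwoAxes M := by
  constructor
  · rintro ⟨t₁, t₂, t₃, a, b, -, rfl⟩
    simp [PreservesFirstTwoAxes]
  · rintro ⟨h10, h20, h01, h21⟩
    refine ⟨M 0 0, M 1 1, M 2 2, M 0 2, M 1 2, ?_, ?_⟩
    · simpa [Matrix.det_fin_three, h10, h20, h01, h21] using hM
    · ext i j
      fin_cases i <;> fin_cases j <;> simp [h10, h20, h01, h21]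

lemma PreservesFirstTwoAxes.mul_apply {h : Matrix (Fin 3) (Fin 3) R}
    (hh : PreservesFirstTwoAxes h) (g : Matrix (Fin 3) (Fin 3) R) (i : Fin 3) {j : Fin 3}
    (hj : j ≠ 2) : (g * h) i j = g i j * h j j := by
  obtain ⟨h10, h20, h01, h21⟩ := hh
  fin_cases j
  · simp [Matrix.mul_apply, Fin.sum_univ_three, h10, h20]
  · simp [Matrix.mul_apply, Fin.sum_univ_three, h01, h21]
  · exact absurd rfl hj

lemma preservesFirstTwoAxes_rho_mul_iff (M : Matrix (Fin 3) (Fin 3) R) :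
    PreservesFirstTwoAxes (!![0, 1, 0; 1, 0, 0; 0, 0, -1] * M) ↔
      M 0 0 = 0 ∧ M 2 0 = 0 ∧ M 1 1 = 0 ∧ M 2 1 = 0 := by
  simp [PreservesFirstTwoAxes, Matrix.mul_apply, Fin.sum_univ_three]

lemma preservesFirstTwoAxes_rho_conj_iff (M : Matrix (Fin 3) (Fin 3) R) :
    PreservesFirstTwoAxes
        (!![0, 1, 0; 1, 0, 0; 0, 0, -1] * M * !![0, 1, 0; 1, 0, 0; 0, 0, -1]) ↔
      PreservesFirstTwoAxes M := by
  simp [PreservesFirstTwoAxes, Matrix.mul_apply, Fin.sum_univ_three, Matrix.vecMul, dotProduct]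
  tauto

lemma preservesFirstTwoAxes_or_swapsFirstTwoAxes {M : Matrix (Fin 3) (Fin 3) R}
    (hdet : M.det ≠ 0) (h20 : M 2 0 = 0) (h21 : M 2 1 = 0) (hcol₀ : M 0 0 = 0 ∨ M 1 0 = 0)
    (hcol₁ : M 0 1 = 0 ∨ M 1 1 = 0) :
    PreservesFirstTwoAxes M ∨ (M 0 0 = 0 ∧ M 1 1 = 0) := by
  rcases hcol₀ with h00 | h10 <;> rcases hcol₁ with h01 | h11
  · exact absurd (by simp [Matrix.det_fin_three, h00, h01, h20, h21]) hdet
  · exact Or.inr ⟨h00, h11⟩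
  · exact Or.inl ⟨h10, h20, h01, h21⟩
  · exact absurd (by simp [Matrix.det_fin_three, h10, h11, h20, h21]) hdet

section Domain

variable [IsDomain R] [NeZero (2 : R)]

lemma eigenvector_mem_axes {v : Fin 3 → R} {c : R}
    (hv : !![-1, 0, 1; 0, 1, 0; 0, 0, -1] *ᵥ v = c • v) : v 2 = 0 ∧ (v 0 = 0 ∨ v 1 = 0) := by
  have e₀ : -v 0 + v 2 = c * v 0 := by
    simpa [Matrix.mulVec, dotProduct, Fin.sum_univ_three] using congrFun hv 0
  have e₁ : v 1 = c * v 1 := by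
    simpa [Matrix.mulVec, dotProduct, Fin.sum_univ_three] using congrFun hv 1
  have e₂ : -v 2 = c * v 2 := by
    simpa [Matrix.mulVec, dotProduct, Fin.sum_univ_three] using congrFun hv 2
  have hv₂ : v 2 = 0 := by
    by_contra hne
    have hc : c = -1 := (mul_right_cancel₀ hne (by linear_combination e₂)).symm
    exact hne (by linear_combination e₀ + v 0 * hc)
  refine ⟨hv₂, or_iff_not_imp_left.mpr fun hne => ?_⟩
  have hc : c = -1 := (mul_right_cancel₀ hne (by linear_combination e₀ - hv₂)).symm
  have h2 : (2 : R) * v 1 = 0 := by linear_combination e₁ + v 1 * hc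
  exact (mul_eq_zero.mp h2).resolve_left two_ne_zero

lemma col_mem_axes_of_mem_normalizer {K : Subgroup SL(3, R)}
    (hK : ∀ g : SL(3, R), g ∈ K ↔ PreservesFirstTwoAxes (g : Matrix (Fin 3) (Fin 3) R))
    {g : SL(3, R)} (hg : g ∈ normalizer (K : Set SL(3, R))) {j : Fin 3} (hj : j ≠ 2) :
    (g : Matrix (Fin 3) (Fin 3) R) 2 j = 0 ∧
      ((g : Matrix (Fin 3) (Fin 3) R) 0 j = 0 ∨ (g : Matrix (Fin 3) (Fin 3) R) 1 j = 0) := by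
  let k : SL(3, R) := ⟨!![-1, 0, 1; 0, 1, 0; 0, 0, -1], by simp [Matrix.det_fin_three]⟩
  have hk : k ∈ K := (hK k).mpr (by simp [k, PreservesFirstTwoAxes])
  obtain ⟨h, hhK, hkg⟩ : ∃ h ∈ K, k * g = g * h :=
    ⟨g⁻¹ * k * g, (mem_normalizer_iff''.mp hg k).mp hk, by group⟩
  have hkgM : (k : Matrix (Fin 3) (Fin 3) R) * (g : Matrix (Fin 3) (Fin 3) R) =
      (g : Matrix (Fin 3) (Fin 3) R) * (h : Matrix (Fin 3) (Fin 3) R) := by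
    rw [← Matrix.SpecialLinearGroup.coe_mul, ← Matrix.SpecialLinearGroup.coe_mul, hkg]
  refine eigenvector_mem_axes (v := fun i => (g : Matrix (Fin 3) (Fin 3) R) i j)
    (c := (h : Matrix (Fin 3) (Fin 3) R) j j) (funext fun i => ?_)
  rw [Pi.smul_apply, smul_eq_mul, mul_comm, ← ((hK h).mp hhK).mul_apply _ _ hj, ← hkgM]
  rfl

theorem normalizer_eq_union_rho_mul {K : Subgroup SL(3, R)}
    (hK : ∀ g : SL(3, R), g ∈ K ↔ PreservesFirstTwoAxes (g : Matrix (Fin 3) (Fin 3) R))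
    {ρ : SL(3, R)} (hρ : (ρ : Matrix (Fin 3) (Fin 3) R) = !![0, 1, 0; 1, 0, 0; 0, 0, -1]) :
    (normalizer (K : Set SL(3, R)) : Set SL(3, R)) =
      (K : Set SL(3, R)) ∪ (fun k => ρ * k) '' K := by
  have hρρ : ρ * ρ = 1 := Subtype.ext <| by simp [hρ, Matrix.one_fin_three]
  have hρN : ρ ∈ normalizer (K : Set SL(3, R)) := mem_normalizer_iff.mpr fun h => by
    simp only [hK, inv_eq_of_mul_eq_one_right hρρ, Matrix.SpecialLinearGroup.coe_mul, hρ,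
      preservesFirstTwoAxes_rho_conj_iff]
  ext g
  refine ⟨fun hg => ?_, ?_⟩
  · obtain ⟨h20, hcol₀⟩ := col_mem_axes_of_mem_normalizer hK hg (j := 0) (by decide)
    obtain ⟨h21, hcol₁⟩ := col_mem_axes_of_mem_normalizer hK hg (j := 1) (by decide)
    have hdet : (g : Matrix (Fin 3) (Fin 3) R).det ≠ 0 := ne_of_eq_of_ne g.2 one_ne_zero
    rcases preservesFirstTwoAxes_or_swapsFirstTwoAxes hdet h20 h21 hcol₀ hcol₁ with
      hP | ⟨h00, h11⟩
    · exact Or.inl ((hK g).mpr hP)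
    · refine Or.inr ⟨ρ * g, (hK _).mpr ?_, by simp [← mul_assoc, hρρ]⟩
      rw [Matrix.SpecialLinearGroup.coe_mul, hρ, preservesFirstTwoAxes_rho_mul_iff]
      exact ⟨h00, h20, h11, h21⟩
  · rintro (hg | ⟨k, hk, rfl⟩)
    · exact le_normalizer hg
    · exact mul_mem hρN (le_normalizer hk)

end Domain

/-- For `G = SL₃(ℂ)` and the subgroup `K` of matrices `[[t₁,0,a],[0,t₂,b],[0,0,t₃]]` with
`t₁t₂t₃ = 1`, the normalizer of `K` equals `K ∪ ρK`, where `ρ = [[0,1,0],[1,0,0],[0,0,−1]]`. -/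
theorem normalizer_of_K_eq_K_union_rhoK
    (K : Subgroup (Matrix.SpecialLinearGroup (Fin 3) ℂ))
    (hK : ∀ g : Matrix.SpecialLinearGroup (Fin 3) ℂ, g ∈ K ↔
      ∃ (t₁ t₂ t₃ a b : ℂ), t₁ * t₂ * t₃ = 1 ∧
        (g : Matrix (Fin 3) (Fin 3) ℂ) = !![t₁, 0, a; 0, t₂, b; 0, 0, t₃])
    (ρ : Matrix.SpecialLinearGroup (Fin 3) ℂ)
    (hρ : (ρ : Matrix (Fin 3) (Fin 3) ℂ) = !![0, 1, 0; 1, 0, 0; 0, 0, -1]) :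
    (Subgroup.normalizer (K : Set (Matrix.SpecialLinearGroup (Fin 3) ℂ)) : Set (Matrix.SpecialLinearGroup (Fin 3) ℂ)) =
      (K : Set (Matrix.SpecialLinearGroup (Fin 3) ℂ)) ∪
        (fun k => ρ * k) '' (K : Set (Matrix.SpecialLinearGroup (Fin 3) ℂ)) :=
  normalizer_eq_union_rho_mul
    (fun g => (hK g).trans (exists_eq_upper_iff_preservesFirstTwoAxes g.2)) hρ
end

section
/- Let G = SL₃(ℂ) and let H ⊆ G be the subgroup of all matrices of the form [[t,0,a],[0,1,b],[0,0,t⁻¹]] with t ∈ ℂˣ and a,b ∈ ℂ. Then N_G(N_G(H)) ≠ N_G(H); that is, the normalizer of H in G is not self-normalizing. -/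
/-!
Let `P ⊆ SL₃(ℂ)` be the stabilizer of the two coordinate axes `ℂe₀` and `ℂe₁`, i.e. the matrices
`[[x,0,a],[0,y,b],[0,0,z]]`. Then `H` is the kernel of the character `g ↦ g₁₁` of `P`, so `P`
normalizes `H`. Conversely, if `g` normalizes `H` then `g e₁` is fixed by `H` and `g e₀` is a common
eigenvector of `H`; testing against `diag(2,1,1/2)` and a transvection puts both on the coordinate
axes, so `N(H) = P`. The signed swap of `e₀` and `e₁` normalizes `P` without lying in it.
-/

namespace Matrix

variable {n R : Type*} [CommRing R] {S : Set n}

/-- `M` maps each coordinate axis `R ∙ eⱼ` with `j ∈ S` into itself. -/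
def PreservesAxes (S : Set n) (M : Matrix n n R) : Prop :=
  ∀ i j, j ∈ S → i ≠ j → M i j = 0

theorem PreservesAxes.mul_apply [Fintype n] {B : Matrix n n R} (hB : PreservesAxes S B)
    (A : Matrix n n R) {j : n} (hj : j ∈ S) (i : n) : (A * B) i j = A i j * B j j := by
  rw [Matrix.mul_apply, Finset.sum_eq_single j (fun k _ hkj => by rw [hB k j hj hkj, mul_zero])
    (by simp)]

theorem PreservesAxes.mul [Fintype n] {A B : Matrix n n R} (hA : PreservesAxes S A)
    (hB : PreservesAxes S B) : PreservesAxes S (A * B) := fun i j hj hij => by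
  rw [hB.mul_apply A hj, hA i j hj hij, zero_mul]

theorem preservesAxes_one [DecidableEq n] : PreservesAxes S (1 : Matrix n n R) :=
  fun _ _ _ hij => one_apply_ne hij

theorem PreservesAxes.of_mul_eq_one [Fintype n] [DecidableEq n] {A B : Matrix n n R}
    (hB : PreservesAxes S B) (hAB : A * B = 1) : PreservesAxes S A := fun i j hj hij => by
  have hjj : A j j * B j j = 1 := by rw [← hB.mul_apply A hj, hAB, one_apply_eq]
  have hij' : A i j * B j j = 0 := by rw [← hB.mul_apply A hj, hAB, one_apply_ne hij]
  linear_combination A j j * hij' - A i j * hjj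

theorem preservesAxes_zero_one_iff (M : Matrix (Fin 3) (Fin 3) R) :
    PreservesAxes {0, 1} M ↔ M 0 1 = 0 ∧ M 1 0 = 0 ∧ M 2 0 = 0 ∧ M 2 1 = 0 := by
  simp [PreservesAxes, Fin.forall_fin_succ]

theorem exists_eq_iff_preservesAxes_zero_one {K : Type*} [Field K] {M : Matrix (Fin 3) (Fin 3) K}
    (hM : M.det = 1) :
    (∃ (t : Kˣ) (a b : K), M = !![(t : K), 0, a; 0, 1, b; 0, 0, (t : K)⁻¹]) ↔
      PreservesAxes {0, 1} M ∧ M 1 1 = 1 := by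
  rw [preservesAxes_zero_one_iff]
  constructor
  · rintro ⟨t, a, b, rfl⟩
    simp
  · rintro ⟨⟨h01, h10, h20, h21⟩, h11⟩
    rw [det_fin_three, h01, h10, h11, h20, h21] at hM
    have hM' : M 0 0 * M 2 2 = 1 := by linear_combination hM
    refine ⟨Units.mk0 _ (left_ne_zero_of_mul_eq_one hM'), M 0 2, M 1 2, ?_⟩
    have h22 : M 2 2 = (M 0 0)⁻¹ := (inv_eq_of_mul_eq_one_right hM').symm
    ext i j
    fin_cases i <;> fin_cases j <;> simp [h01, h10, h11, h20, h21, h22]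

namespace SpecialLinearGroup

variable [Fintype n] [DecidableEq n]

def axisStabilizer (S : Set n) : Subgroup (SpecialLinearGroup n R) where
  carrier := {g | PreservesAxes S (g : Matrix n n R)}
  mul_mem' ha hb := ha.mul hb
  one_mem' := preservesAxes_one
  inv_mem' hg := hg.of_mul_eq_one (by rw [← coe_mul, inv_mul_cancel, coe_one])

@[simp]
theorem mem_axisStabilizer {g : SpecialLinearGroup n R} :
    g ∈ axisStabilizer S ↔ PreservesAxes S (g : Matrix n n R) :=
  Iff.rfl

def diagEntryHom {j : n} (hj : j ∈ S) : axisStabilizer (R := R) S →* R where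
  toFun g := (g : Matrix n n R) j j
  map_one' := one_apply_eq j
  map_mul' _ h := h.2.mul_apply _ hj j

theorem axisStabilizer_le_normalizer {K : Subgroup (SpecialLinearGroup n R)} {j : n} (hj : j ∈ S)
    (hK : ∀ g, g ∈ K ↔ g ∈ axisStabilizer S ∧ (g : Matrix n n R) j j = 1) :
    axisStabilizer S ≤ Subgroup.normalizer (K : Set (SpecialLinearGroup n R)) := by
  have hKP : K ≤ axisStabilizer S := fun g hg => ((hK g).1 hg).1
  have hker : K.subgroupOf (axisStabilizer S) = (diagEntryHom hj).ker := by
    ext g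
    simp [Subgroup.mem_subgroupOf, hK, diagEntryHom, g.2]
  have : (K.subgroupOf (axisStabilizer S)).Normal := hker ▸ MonoidHom.normal_ker _
  exact Subgroup.le_normalizer_of_normal_subgroupOf hKP

theorem exists_mul_apply_eq_of_mem_normalizer {K : Subgroup (SpecialLinearGroup n R)}
    (hKP : K ≤ axisStabilizer S) {g k : SpecialLinearGroup n R}
    (hg : g ∈ Subgroup.normalizer (K : Set (SpecialLinearGroup n R))) (hk : k ∈ K)
    {j : n} (hj : j ∈ S) : ∃ k' ∈ K, ∀ i, ((k : Matrix n n R) * g) i j = g i j * k' j j := by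
  refine ⟨g⁻¹ * k * g, (Subgroup.mem_normalizer_iff''.1 hg k).1 hk, fun i => ?_⟩
  rw [← (hKP ((Subgroup.mem_normalizer_iff''.1 hg k).1 hk)).mul_apply _ hj, ← coe_mul, ← coe_mul]
  group

variable {K : Type*} [Field K] [CharZero K]

theorem normalizer_le_axisStabilizer {H : Subgroup (SpecialLinearGroup (Fin 3) K)}
    (hH : ∀ g, g ∈ H ↔ g ∈ axisStabilizer {0, 1} ∧ (g : Matrix (Fin 3) (Fin 3) K) 1 1 = 1) :
    Subgroup.normalizer (H : Set (SpecialLinearGroup (Fin 3) K)) ≤ axisStabilizer {0, 1} := by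
  intro g hg
  have hHP : H ≤ axisStabilizer {0, 1} := fun h hh => ((hH h).1 hh).1
  let d : SpecialLinearGroup (Fin 3) K := ⟨!![2, 0, 0; 0, 1, 0; 0, 0, 2⁻¹], by simp [det_fin_three]⟩
  let u : SpecialLinearGroup (Fin 3) K := ⟨!![1, 0, 1; 0, 1, 0; 0, 0, 1], by simp [det_fin_three]⟩
  have hd : d ∈ H := (hH d).2 ⟨(preservesAxes_zero_one_iff _).2 (by simp [d]), by simp [d]⟩
  have hu : u ∈ H := (hH u).2 ⟨(preservesAxes_zero_one_iff _).2 (by simp [u]), by simp [u]⟩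
  obtain ⟨d₁, hd₁, ed₁⟩ := exists_mul_apply_eq_of_mem_normalizer hHP hg hd (j := 1) (by simp)
  obtain ⟨d₀, -, ed₀⟩ := exists_mul_apply_eq_of_mem_normalizer hHP hg hd (j := 0) (by simp)
  obtain ⟨u₀, -, eu₀⟩ := exists_mul_apply_eq_of_mem_normalizer hHP hg hu (j := 0) (by simp)
  rw [((hH _).1 hd₁).2] at ed₁
  have e01 := ed₁ 0
  have e21 := ed₁ 2
  have e00 := ed₀ 0
  have e10 := ed₀ 1
  have f00 := eu₀ 0
  have f20 := eu₀ 2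
  simp only [d, u, mul_apply, Fin.sum_univ_three, of_apply, cons_val', cons_val_fin_one,
    cons_val_zero, cons_val_one, cons_val, zero_mul, add_zero, mul_one, zero_add, one_mul]
    at e01 e21 e00 e10 f00 f20
  set M := (g : Matrix (Fin 3) (Fin 3) K)
  have h01 : M 0 1 = 0 := by linear_combination e01
  have h21 : M 2 1 = 0 := by linear_combination -2 * e21
  have h20 : M 2 0 = 0 := pow_eq_zero_iff two_ne_zero |>.1 <| by
    linear_combination -M 0 0 * f20 + M 2 0 * f00
  have hdet : M 0 0 * M 1 1 * M 2 2 = 1 := by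
    have : M.det = 1 := g.det_coe
    rw [det_fin_three, h01, h21, h20] at this
    linear_combination this
  have h10 : M 1 0 = 0 := by
    linear_combination M 1 1 * M 2 2 * (-M 0 0 * e10 + M 1 0 * e00) - M 1 0 * hdet
  exact (preservesAxes_zero_one_iff _).2 ⟨h01, h10, h20, h21⟩

def swapAxes (R : Type*) [CommRing R] : SpecialLinearGroup (Fin 3) R :=
  ⟨!![0, 1, 0; -1, 0, 0; 0, 0, 1], by simp [det_fin_three]⟩

theorem swapAxes_not_mem_axisStabilizer (R : Type*) [CommRing R] [Nontrivial R] :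
    swapAxes R ∉ axisStabilizer {0, 1} := by
  rw [mem_axisStabilizer, preservesAxes_zero_one_iff]
  simp [swapAxes]

theorem coe_swapAxes_mul_mul_inv (R : Type*) [CommRing R] (g : SpecialLinearGroup (Fin 3) R) :
    ((swapAxes R * g * (swapAxes R)⁻¹ : SpecialLinearGroup (Fin 3) R) : Matrix (Fin 3) (Fin 3) R) =
      !![g 1 1, -g 1 0, g 1 2; -g 0 1, g 0 0, -g 0 2; g 2 1, -g 2 0, g 2 2] := by
  rw [coe_mul, coe_mul, coe_inv]
  ext i j
  fin_cases i <;> fin_cases j <;>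
    simp [swapAxes, adjugate_fin_three, Matrix.mul_apply, vecMul, dotProduct, Fin.sum_univ_three]

theorem swapAxes_mem_normalizer_axisStabilizer (R : Type*) [CommRing R] :
    swapAxes R ∈ Subgroup.normalizer
      (axisStabilizer (n := Fin 3) (R := R) {0, 1} : Set (SpecialLinearGroup (Fin 3) R)) := by
  refine Subgroup.mem_normalizer_iff.2 fun g => ?_
  simp only [mem_axisStabilizer, preservesAxes_zero_one_iff,
    coe_swapAxes_mul_mul_inv, of_apply, cons_val', cons_val_zero, cons_val_one, cons_val,
    cons_val_fin_one, neg_eq_zero]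
  tauto

end SpecialLinearGroup
end Matrix

open Matrix SpecialLinearGroup in
/-- For `G = SL₃(ℂ)` and the subgroup `H` of matrices `[[t,0,a],[0,1,b],[0,0,t⁻¹]]`
(with `t ∈ ℂˣ`, `a, b ∈ ℂ`), the normalizer of `H` in `G` is not self-normalizing:
`N_G(N_G(H)) ≠ N_G(H)`. -/
theorem normalizer_not_self_normalizing
    (H : Subgroup (Matrix.SpecialLinearGroup (Fin 3) ℂ))
    (hH : ∀ g : Matrix.SpecialLinearGroup (Fin 3) ℂ, g ∈ H ↔
      ∃ (t : ℂˣ) (a b : ℂ),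
        (g : Matrix (Fin 3) (Fin 3) ℂ) = !![(t : ℂ), 0, a; 0, 1, b; 0, 0, (t : ℂ)⁻¹]) :
    Subgroup.normalizer (Subgroup.normalizer (H : Set (Matrix.SpecialLinearGroup (Fin 3) ℂ)) :
      Set (Matrix.SpecialLinearGroup (Fin 3) ℂ)) ≠
      Subgroup.normalizer (H : Set (Matrix.SpecialLinearGroup (Fin 3) ℂ)) := by
  have hH' : ∀ g, g ∈ H ↔ g ∈ axisStabilizer {0, 1} ∧ (g : Matrix (Fin 3) (Fin 3) ℂ) 1 1 = 1 :=
    fun g => (hH g).trans (exists_eq_iff_preservesAxes_zero_one g.det_coe)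
  have hN : Subgroup.normalizer (H : Set (SpecialLinearGroup (Fin 3) ℂ)) = axisStabilizer {0, 1} :=
    (normalizer_le_axisStabilizer hH').antisymm (axisStabilizer_le_normalizer (by simp) hH')
  rw [hN]
  exact fun h => swapAxes_not_mem_axisStabilizer ℂ (h ▸ swapAxes_mem_normalizer_axisStabilizer ℂ)
end

section
/- Let 𝔟 ⊆ 𝔰𝔩₃(ℂ) be the subspace of upper-triangular trace-zero matrices and let 𝔥 ⊆ 𝔰𝔩₃(ℂ) be the subspace of all matrices [[x,0,a],[0,0,b],[0,0,−x]] with x,a,b ∈ ℂ. Then there exists g ∈ SL₃(ℂ) such that 𝔟 + g𝔥g⁻¹ = 𝔰𝔩₃(ℂ) (sum of ℂ-subspaces of the space of 3×3 complex matrices), i.e., the subalgebra 𝔥 is spherical in 𝔰𝔩₃(ℂ). -/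
/-- Let `𝔟 ⊆ 𝔰𝔩₃(ℂ)` be the Borel subalgebra of upper-triangular trace-zero matrices and
`𝔥` the subspace of matrices `[[x,0,a],[0,0,b],[0,0,−x]]`. Then there exists `g ∈ SL₃(ℂ)`
with `𝔟 + g𝔥g⁻¹ = 𝔰𝔩₃(ℂ)`, i.e. `𝔥` is a spherical subalgebra of `𝔰𝔩₃(ℂ)`. -/
theorem h_is_spherical_in_sl3
    (b h : Submodule ℂ (Matrix (Fin 3) (Fin 3) ℂ))
    (hb : ∀ X : Matrix (Fin 3) (Fin 3) ℂ, X ∈ b ↔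
      (Matrix.trace X = 0 ∧ ∀ i j : Fin 3, j < i → X i j = 0))
    (hh : ∀ X : Matrix (Fin 3) (Fin 3) ℂ, X ∈ h ↔
      ∃ x a c : ℂ, X = !![x, 0, a; 0, 0, c; 0, 0, -x]) :
    ∃ g : Matrix.SpecialLinearGroup (Fin 3) ℂ,
      ∀ X : Matrix (Fin 3) (Fin 3) ℂ,
        Matrix.trace X = 0 ↔
          ∃ Y ∈ b, ∃ Z ∈ h,
            X = Y + (g : Matrix (Fin 3) (Fin 3) ℂ) * Z *
              ((g⁻¹ : Matrix.SpecialLinearGroup (Fin 3) ℂ) : Matrix (Fin 3) (Fin 3) ℂ) := by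
  set M : Matrix (Fin 3) (Fin 3) ℂ := !![1,0,0;1,1,0;1,2,1] with hM
  set N : Matrix (Fin 3) (Fin 3) ℂ := !![1,0,0;-1,1,0;1,-2,1] with hN
  have hdet : M.det = 1 := by simp [hM, Matrix.det_fin_three]
  refine ⟨⟨M, hdet⟩, ?_⟩
  set g : Matrix.SpecialLinearGroup (Fin 3) ℂ := ⟨M, hdet⟩ with hg
  have hMN : M * N = 1 := by
    ext i j
    fin_cases i <;> fin_cases j <;>
      norm_num [hM, hN, Matrix.mul_apply, Fin.sum_univ_succ, Matrix.one_apply, Fin.ext_iff]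
  have hcg : (g : Matrix (Fin 3) (Fin 3) ℂ) = M := rfl
  have hNM : ((g⁻¹ : Matrix.SpecialLinearGroup (Fin 3) ℂ) : Matrix (Fin 3) (Fin 3) ℂ) * M = 1 := by
    rw [← hcg, ← Matrix.SpecialLinearGroup.coe_mul, inv_mul_cancel,
      Matrix.SpecialLinearGroup.coe_one]
  have hcgi : ((g⁻¹ : Matrix.SpecialLinearGroup (Fin 3) ℂ) : Matrix (Fin 3) (Fin 3) ℂ) = N := by
    calc ((g⁻¹ : Matrix.SpecialLinearGroup (Fin 3) ℂ) : Matrix (Fin 3) (Fin 3) ℂ)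
        = ((g⁻¹ : Matrix.SpecialLinearGroup (Fin 3) ℂ) : Matrix (Fin 3) (Fin 3) ℂ) * (M * N) := by
          rw [hMN, mul_one]
      _ = N := by rw [← mul_assoc, hNM, one_mul]
  intro X
  constructor
  · intro htr
    rw [Matrix.trace_fin_three] at htr
    set p : ℂ := X 1 0
    set q : ℂ := X 2 0
    set r : ℂ := X 2 1
    set x : ℂ := q + r/2
    set a : ℂ := 2*p - 3*q - r
    set c : ℂ := 2*q - p + r/2
    refine ⟨!![X 0 0 - (x+a), X 0 1 + 2*a, X 0 2 - a;
               0, X 1 1 + 2*(a+c), X 1 2 - (a+c);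
               0, 0, X 2 2 - (a+2*c-x)], ?_, !![x,0,a;0,0,c;0,0,-x], ?_, ?_⟩
    · rw [hb]
      refine ⟨?_, ?_⟩
      · rw [Matrix.trace_fin_three]
        simp [Matrix.vecHead, Matrix.vecTail]
        linear_combination htr
      · intro i j hij
        fin_cases i <;> fin_cases j <;> simp_all [Matrix.vecHead, Matrix.vecTail]
    · rw [hh]; exact ⟨x, a, c, rfl⟩
    · rw [hcgi, hcg]
      ext i j
      fin_cases i <;> fin_cases j <;>
        simp [hM, hN, Matrix.mul_apply, Fin.sum_univ_succ, Matrix.vecHead, Matrix.vecTail,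
          x, a, c, p, q, r] <;> ring
  · rintro ⟨Y, hY, Z, hZ, rfl⟩
    obtain ⟨htrY, -⟩ := (hb Y).mp hY
    obtain ⟨x, a, c, rfl⟩ := (hh Z).mp hZ
    rw [Matrix.trace_add, htrY, Matrix.trace_mul_cycle, hNM]
    simp [Matrix.trace_fin_three]
end

section
/- Let V be a finite-dimensional real inner product space, Π ⊆ V a finite linearly independent set, Δ₊ a finite set of nonzero vectors in V each of which is a nonnegative-integer linear combination of Π, with Π ⊆ Δ₊, and Ψ ⊆ Δ₊ a subset. Assume (v) for all distinct δ, ε ∈ Π one has (δ,ε) ≤ 0, and if (δ,ε) < 0 then δ + ε ∈ Δ₊. Let s : V → V be a linear map preserving the inner product such that: (i) s(γ) ∈ Δ₊ for every γ ∈ Δ₊ \ Ψ; (ii) s(β) ∈ {β, −β} for every β ∈ Ψ; (iii) every β ∈ Ψ with s(β) = −β lies in Π; (iv) for all distinct δ, ε ∈ Π, δ + ε ∉ Ψ. Then for every α ∈ Ψ ∩ Π with s(α) = −α and every β ∈ Ψ \ {α}, one has (α, β) = 0. -/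
/-!
If `β ∈ Ψ` is fixed by `s`, then `(α, β) = (sα, sβ) = -(α, β)`. Otherwise `s β = -β`, so `β` is a
simple root by (iii); if `(α, β) < 0`, then `α + β` is a positive root by (v), not in `Ψ` by (iv),
hence `s (α + β) = -(α + β)` is a positive root by (i). But no vector and its negative can both
be nonnegative combinations of the linearly independent set `Π`.
-/

section NonnegCombination

variable {V : Type*} [AddCommGroup V] [Module ℝ V] {P : Finset V}

theorem sum_natCast_smul_eq_zero_of_eq_neg (hP : LinearIndependent ℝ (fun p : P => (p : V)))
    {k m : V → ℕ} (h : ∑ δ ∈ P, (k δ : ℝ) • δ = -∑ δ ∈ P, (m δ : ℝ) • δ) :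
    ∑ δ ∈ P, (k δ : ℝ) • δ = 0 := by
  have hsum : ∑ δ : P, ((k δ : ℝ) + m δ) • (δ : V) = 0 := by
    rw [Finset.sum_coe_sort P fun δ => ((k δ : ℝ) + m δ) • δ]
    simp only [add_smul, Finset.sum_add_distrib, h, neg_add_cancel]
  have hcoeff := Fintype.linearIndependent_iff.mp hP _ hsum
  refine Finset.sum_eq_zero fun δ hδ => ?_
  have hkm : (k δ : ℝ) + m δ = 0 := hcoeff ⟨δ, hδ⟩
  have hk : (k δ : ℝ) = 0 := by
    linarith [(k δ).cast_nonneg (α := ℝ), (m δ).cast_nonneg (α := ℝ)]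
  rw [hk, zero_smul]

theorem neg_notMem_of_nonneg_combinations {D : Finset V}
    (hP : LinearIndependent ℝ (fun p : P => (p : V)))
    (hD : ∀ α ∈ D, α ≠ 0 ∧ ∃ k : V → ℕ, α = ∑ δ ∈ P, (k δ : ℝ) • δ)
    {γ : V} (hγ : γ ∈ D) : -γ ∉ D := by
  intro hnegγ
  obtain ⟨hγ0, k, hk⟩ := hD γ hγ
  obtain ⟨-, m, hm⟩ := hD (-γ) hnegγ
  have hkm : ∑ δ ∈ P, (k δ : ℝ) • δ = -∑ δ ∈ P, (m δ : ℝ) • δ := by rw [← hk, ← hm, neg_neg]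
  exact hγ0 (hk.trans (sum_natCast_smul_eq_zero_of_eq_neg hP hkm))

end NonnegCombination

theorem inner_eq_zero_of_map_eq_neg_of_map_eq {V : Type*} [NormedAddCommGroup V]
    [InnerProductSpace ℝ V] {s : V →ₗ[ℝ] V}
    (hs : ∀ x y : V, (inner ℝ (s x) (s y) : ℝ) = (inner ℝ x y : ℝ))
    {α β : V} (hα : s α = -α) (hβ : s β = β) : (inner ℝ α β : ℝ) = 0 := by
  have h := hs α β
  rw [hα, hβ, inner_neg_left] at h
  linarith

theorem orthogonality_of_reflected_simple_root_general
    {V : Type*} [NormedAddCommGroup V] [InnerProductSpace ℝ V]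
    (P D Psi : Finset V)
    (hP : LinearIndependent ℝ (fun p : P => (p : V)))
    (hD : ∀ α ∈ D, α ≠ 0 ∧ ∃ k : V → ℕ, α = ∑ δ ∈ P, (k δ : ℝ) • δ)
    -- (v): distinct simple roots have nonpositive inner product, and if it is negative
    -- their sum is a positive root
    (hv : ∀ δ ∈ P, ∀ ε ∈ P, δ ≠ ε →
      (inner ℝ δ ε : ℝ) ≤ 0 ∧ ((inner ℝ δ ε : ℝ) < 0 → δ + ε ∈ D))
    (s : V →ₗ[ℝ] V)
    (hs : ∀ x y : V, (inner ℝ (s x) (s y) : ℝ) = (inner ℝ x y : ℝ))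
    -- (i)
    (h1 : ∀ γ ∈ D, γ ∉ Psi → s γ ∈ D)
    -- (ii)
    (h2 : ∀ β ∈ Psi, s β = β ∨ s β = -β)
    -- (iii)
    (h3 : ∀ β ∈ Psi, s β = -β → β ∈ P)
    -- (iv)
    (h4 : ∀ δ ∈ P, ∀ ε ∈ P, δ ≠ ε → δ + ε ∉ Psi) :
    ∀ α ∈ Psi, α ∈ P → s α = -α → ∀ β ∈ Psi, β ≠ α → (inner ℝ α β : ℝ) = 0 := by
  intro α _ hαP hsα β hβΨ hβα
  rcases h2 β hβΨ with hsβ | hsβ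
  · exact inner_eq_zero_of_map_eq_neg_of_map_eq hs hsα hsβ
  have hβP := h3 β hβΨ hsβ
  obtain ⟨hle, hlt⟩ := hv α hαP β hβP hβα.symm
  refine hle.antisymm (not_lt.mp fun hneg => ?_)
  have hsumD : α + β ∈ D := hlt hneg
  have hs_sum : s (α + β) = -(α + β) := by rw [map_add, hsα, hsβ, neg_add]
  exact neg_notMem_of_nonneg_combinations hP hD hsumD
    (hs_sum ▸ h1 _ hsumD (h4 α hαP β hβP hβα.symm))

/-- Abstract version of Proposition 9 (orthogonality): if `α ∈ Ψ ∩ Π` satisfies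
`s α = −α`, then `α` is orthogonal to every other element of `Ψ`. -/
theorem orthogonality_of_reflected_simple_root
    {V : Type*} [NormedAddCommGroup V] [InnerProductSpace ℝ V] [FiniteDimensional ℝ V]
    (P D Psi : Finset V)
    (hP : LinearIndependent ℝ (fun p : P => (p : V)))
    (hD : ∀ α ∈ D, α ≠ 0 ∧ ∃ k : V → ℕ, α = ∑ δ ∈ P, (k δ : ℝ) • δ)
    (hPD : P ⊆ D)
    (hPsiD : Psi ⊆ D)
    -- (v): distinct simple roots have nonpositive inner product, and if it is negative
    -- their sum is a positive root
    (hv : ∀ δ ∈ P, ∀ ε ∈ P, δ ≠ ε →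
      (inner ℝ δ ε : ℝ) ≤ 0 ∧ ((inner ℝ δ ε : ℝ) < 0 → δ + ε ∈ D))
    (s : V →ₗ[ℝ] V)
    (hs : ∀ x y : V, (inner ℝ (s x) (s y) : ℝ) = (inner ℝ x y : ℝ))
    -- (i)
    (h1 : ∀ γ ∈ D, γ ∉ Psi → s γ ∈ D)
    -- (ii)
    (h2 : ∀ β ∈ Psi, s β = β ∨ s β = -β)
    -- (iii)
    (h3 : ∀ β ∈ Psi, s β = -β → β ∈ P)
    -- (iv)
    (h4 : ∀ δ ∈ P, ∀ ε ∈ P, δ ≠ ε → δ + ε ∉ Psi) :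
    ∀ α ∈ Psi, α ∈ P → s α = -α → ∀ β ∈ Psi, β ≠ α → (inner ℝ α β : ℝ) = 0 :=
  orthogonality_of_reflected_simple_root_general P D Psi hP hD hv s hs h1 h2 h3 h4
end

section
/- Let V be a finite-dimensional real vector space, Π ⊆ V a finite linearly independent set, Δ₊ a finite set of nonzero vectors each of which is a nonnegative-integer linear combination of Π, Ψ ⊆ Δ₊, V' a real vector space, τ : V → V' a linear map, and π : Ψ → Π a map with π(δ) ∈ Supp δ for all δ ∈ Ψ. For each α ∈ Ψ let F(α) ⊆ Ψ be a subset with α ∈ F(α) such that every δ ∈ F(α) satisfies Supp δ ⊆ Supp α, and every δ ∈ F(α) \ {α} satisfies α − δ ∈ Δ₊ and α − δ ∉ Ψ. Call δ ∈ Ψ regular if every γ ∈ Ψ with τ(γ) = τ(δ) equals δ. Let s : V → V be a linear map such that: (1) s(γ) ∈ Δ₊ for every γ ∈ Δ₊ which is not a regular element of Ψ; (2) for every α ∈ Ψ, s(α) ∈ Δ₊ ∪ (−Δ₊), and the positive element α̃ of {s(α), −s(α)} lies in Ψ and satisfies π(α̃) = π(α); (3) for all δ₁, δ₂ ∈ Ψ,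 π(δ₁) = π(δ₂) implies τ(δ₁) = τ(δ₂); (4) for all distinct α, β ∈ Ψ with τ(α) = τ(β) and π(α) = π(β), there exist α' ∈ F(α) and β' ∈ F(β) with τ(α') = τ(β'), π(α') ∉ Supp β, and π(β') ∉ Supp α. Then s(α) ∈ {α, −α} for every α ∈ Ψ. -/
/-- Abstract version of Proposition 8: under hypotheses (1)–(4) on the linear map `s`,
one has `s α ∈ {α, −α}` for every `α ∈ Ψ`. -/
theorem s_alpha_eq_pm_alpha
    {V V' : Type*} [AddCommGroup V] [Module ℝ V] [FiniteDimensional ℝ V]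
    [AddCommGroup V'] [Module ℝ V']
    (P D Psi : Finset V)
    (hP : LinearIndependent ℝ (fun p : P => (p : V)))
    (hPsiD : Psi ⊆ D)
    (Supp : V → Set V)
    -- the elements of `Δ₊` are nonzero nonnegative-integer combinations of `Π`,
    -- and `Supp` is the set of simple roots occurring with nonzero coefficient
    (hD : ∀ α ∈ D, α ≠ 0 ∧ ∃ k : V → ℕ,
      α = ∑ δ ∈ P, (k δ : ℝ) • δ ∧ Supp α = {δ : V | δ ∈ P ∧ k δ ≠ 0})
    (τ : V →ₗ[ℝ] V')
    (π : V → V)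
    (hπ : ∀ δ ∈ Psi, π δ ∈ Supp δ)
    (F : V → Finset V)
    (hF : ∀ α ∈ Psi, α ∈ F α ∧ ↑(F α) ⊆ (Psi : Set V) ∧
      ∀ δ ∈ F α, Supp δ ⊆ Supp α ∧ (δ ≠ α → α - δ ∈ D ∧ α - δ ∉ Psi))
    (s : V →ₗ[ℝ] V)
    -- (1): `s` maps every positive root that is not a regular element of `Ψ` to a
    -- positive root
    (h1 : ∀ γ ∈ D, ¬(γ ∈ Psi ∧ ∀ γ' ∈ Psi, τ γ' = τ γ → γ' = γ) → s γ ∈ D)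
    -- (2): for `α ∈ Ψ`, the positive element of `{s α, −s α}` lies in `Ψ` and has the
    -- same distinguished simple root
    (h2 : ∀ α ∈ Psi, ∃ α' ∈ Psi, (α' = s α ∨ α' = -(s α)) ∧ π α' = π α)
    -- (3)
    (h3 : ∀ δ₁ ∈ Psi, ∀ δ₂ ∈ Psi, π δ₁ = π δ₂ → τ δ₁ = τ δ₂)
    -- (4)
    (h4 : ∀ α ∈ Psi, ∀ β ∈ Psi, α ≠ β → τ α = τ β → π α = π β →
      ∃ α' ∈ F α, ∃ β' ∈ F β, τ α' = τ β' ∧ π α' ∉ Supp β ∧ π β' ∉ Supp α) :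
    ∀ α ∈ Psi, s α = α ∨ s α = -α := by
  classical
  -- coefficient vanishing from linear independence
  have key0 : ∀ f : V → ℝ, (∑ p ∈ P, f p • p = 0) → ∀ p ∈ P, f p = 0 := by
    intro f hf p hp
    have hsum : ∑ x : P, f (x : V) • (x : V) = 0 := by
      rw [Finset.sum_coe_sort P (fun p => f p • p)]; exact hf
    exact Fintype.linearIndependent_iff.mp hP (fun x : P => f (x : V)) hsum ⟨p, hp⟩
  -- uniqueness of coefficients
  have uniq : ∀ f g : V → ℝ, (∑ p ∈ P, f p • p = ∑ p ∈ P, g p • p) →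
      ∀ p ∈ P, f p = g p := by
    intro f g h p hp
    have h0 : ∑ p ∈ P, (f p - g p) • p = 0 := by
      simp only [sub_smul, Finset.sum_sub_distrib, h, sub_self]
    have h1 : f p - g p = 0 := key0 (fun p => f p - g p) h0 p hp
    linarith
  -- real nonneg representation of elements of D
  have rep : ∀ x ∈ D, ∃ k : V → ℝ, (∀ p, 0 ≤ k p) ∧ x = ∑ p ∈ P, k p • p ∧
      (∃ p ∈ P, k p ≠ 0) ∧ ∀ q, (q ∈ Supp x ↔ q ∈ P ∧ k q ≠ 0) := by
    intro x hx
    obtain ⟨hx0, k, hsum, hsupp⟩ := hD x hx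
    refine ⟨fun p => (k p : ℝ), fun p => Nat.cast_nonneg _, hsum, ?_, ?_⟩
    · by_contra h; push_neg at h
      apply hx0
      rw [hsum]
      apply Finset.sum_eq_zero
      intro p hp
      rw [h p hp, zero_smul]
    · intro q
      rw [hsupp]
      simp [Nat.cast_ne_zero]
  -- an element of D plus a nonnegative combination is nonzero
  have posne : ∀ x ∈ D, ∀ c : V → ℝ, (∀ p, 0 ≤ c p) →
      x + ∑ p ∈ P, c p • p ≠ 0 := by
    intro x hx c hc h
    obtain ⟨k, hk0, hkx, ⟨p₀, hp₀P, hp₀⟩, _⟩ := rep x hx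
    have hsum : ∑ p ∈ P, (k p + c p) • p = ∑ p ∈ P, (0 : ℝ) • p := by
      simp only [add_smul, Finset.sum_add_distrib, ← hkx, h, zero_smul,
        Finset.sum_const_zero]
    have h0 : k p₀ + c p₀ = 0 := uniq (fun p => k p + c p) (fun _ => 0) hsum p₀ hp₀P
    have h1 := hk0 p₀
    have h2 := hc p₀
    apply hp₀
    linarith
  -- if z = x + y with x, y, z ∈ D then Supp y ⊆ Supp z
  have suppsum : ∀ x ∈ D, ∀ y ∈ D, ∀ z ∈ D, z = x + y → Supp y ⊆ Supp z := by
    intro x hx y hy z hz hzxy q hq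
    obtain ⟨a, ha0, hax, _, _⟩ := rep x hx
    obtain ⟨b, hb0, hby, _, hbs⟩ := rep y hy
    obtain ⟨c, hc0, hcz, _, hcs⟩ := rep z hz
    obtain ⟨hqP, hbq⟩ := (hbs q).mp hq
    have hsum : ∑ p ∈ P, c p • p = ∑ p ∈ P, (a p + b p) • p := by
      rw [← hcz, hzxy, hax, hby, ← Finset.sum_add_distrib]
      simp [add_smul]
    have hcq : c q = a q + b q := uniq c (fun p => a p + b p) hsum q hqP
    refine (hcs q).mpr ⟨hqP, ?_⟩
    have ha := ha0 q
    have hb := hb0 q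
    intro h0
    apply hbq
    rw [hcq] at h0
    linarith
  -- main argument
  intro α hα
  obtain ⟨α', hα'Ψ, hsα, hπα'⟩ := h2 α hα
  by_cases hne : α' = α
  · subst hne
    rcases hsα with h | h
    · exact Or.inl h.symm
    · right
      have h2 := congrArg Neg.neg h
      rwa [neg_neg, eq_comm] at h2
  · exfalso
    have hτ : τ α = τ α' := h3 α hα α' hα'Ψ hπα'.symm
    obtain ⟨δ, hδF, δ', hδ'F, hτδ, hπδ, hπδ'⟩ :=
      h4 α hα α' hα'Ψ (fun h => hne h.symm) hτ hπα'.symm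
    obtain ⟨-, hFαΨ, hFα⟩ := hF α hα
    obtain ⟨-, hFα'Ψ, _⟩ := hF α' hα'Ψ
    have hδΨ : δ ∈ Psi := hFαΨ hδF
    have hδ'Ψ : δ' ∈ Psi := hFα'Ψ hδ'F
    obtain ⟨hδsupp, hδne⟩ := hFα δ hδF
    -- δ ≠ α since π δ ∉ Supp α' but π α = π α' ∈ Supp α'
    have hπα'supp : π α' ∈ Supp α' := hπ α' hα'Ψ
    have hδα : δ ≠ α := by
      intro h; apply hπδ; rw [h, ← hπα']; exact hπα'supp
    obtain ⟨hαδD, hαδΨ⟩ := hδne hδα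
    -- δ' ≠ δ
    have hδ'δ : δ' ≠ δ := by
      intro h
      apply hπδ'
      apply hδsupp
      rw [h] at *
      exact hπ δ hδΨ
    -- δ is not regular, so s δ ∈ D
    have hsδD : s δ ∈ D := by
      apply h1 δ (hPsiD hδΨ)
      rintro ⟨-, hreg⟩
      exact hδ'δ (hreg δ' hδ'Ψ hτδ.symm)
    -- s (α - δ) ∈ D
    have hsαδD : s (α - δ) ∈ D := by
      apply h1 _ hαδD
      rintro ⟨h, -⟩
      exact hαδΨ h
    have hsplit : s α = s (α - δ) + s δ := by
      rw [← map_add]; congr 1; abel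
    rcases hsα with hcase | hcase
    · -- s α = α' : derive contradiction via supports
      obtain ⟨δt, hδtΨ, hsδt, hπδt⟩ := h2 δ hδΨ
      have hsδ : s δ = δt := by
        rcases hsδt with h | h
        · exact h.symm
        · -- δt = -(s δ) : impossible since both δt and s δ are in D
          exfalso
          obtain ⟨c, hc0, hcx, _, _⟩ := rep (s δ) hsδD
          refine posne δt (hPsiD hδtΨ) c hc0 ?_
          rw [← hcx, h]
          abel
      have : π δt ∈ Supp α' := by
        apply suppsum (s (α - δ)) hsαδD (s δ) hsδD α' (hPsiD hα'Ψ)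
          (by rw [hcase, hsplit])
        rw [hsδ]
        exact hπ δt hδtΨ
      rw [hπδt] at this
      exact hπδ this
    · -- α' = -(s α) : impossible, sum of positive things is zero
      obtain ⟨a, ha0, hax, _, _⟩ := rep (s (α - δ)) hsαδD
      obtain ⟨b, hb0, hbx, _, _⟩ := rep (s δ) hsδD
      refine posne α' (hPsiD hα'Ψ) (fun p => a p + b p) (fun p => by
        have h1 := ha0 p; have h2 := hb0 p; show (0:ℝ) ≤ a p + b p; linarith) ?_
      have : ∑ p ∈ P, (a p + b p) • p = s (α - δ) + s δ := by
        rw [hax, hbx, ← Finset.sum_add_distrib]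
        simp [add_smul]
      rw [this, ← hsplit, hcase]
      abel
end

section
/- Let V be a finite-dimensional real vector space, Π ⊆ V a finite linearly independent set, Ψ a finite set of nonzero vectors each of which is a nonnegative-integer linear combination of Π, V' a real vector space, τ : V → V' a linear map, and π : Ψ → Π a map with π(δ) ∈ Supp δ for all δ ∈ Ψ. For each γ ∈ Ψ let F(γ) ⊆ Ψ be a subset such that: every δ ∈ F(γ) satisfies Supp δ ⊆ Supp γ; the restriction of π to F(γ) is a bijection from F(γ) onto Supp γ; and τ is injective on F(γ). Assume moreover that (a) any family of elements of Ψ with pairwise distinct τ-images has linearly independent τ-images in V', and (b) for all δ₁, δ₂ ∈ Ψ, π(δ₁) = π(δ₂) implies τ(δ₁) = τ(δ₂). Then for any two distinct α, β ∈ Ψ with τ(α) = τ(β) and π(α) = π(β), there exist α̃ ∈ F(α) and β̃ ∈ F(β) such that τ(α̃) = τ(β̃), π(α̃) ∉ Supp β, and π(β̃) ∉ Supp α. -/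
/-- Abstract version of Proposition 4: for distinct `α, β ∈ Ψ` with `τ α = τ β` and
`π α = π β`, there are `α̃ ∈ F(α)`, `β̃ ∈ F(β)` with `τ α̃ = τ β̃`, `π α̃ ∉ Supp β` and
`π β̃ ∉ Supp α`. -/
theorem exists_subordinate_pair
    {V V' : Type*} [AddCommGroup V] [Module ℝ V] [FiniteDimensional ℝ V]
    [AddCommGroup V'] [Module ℝ V']
    (P Psi : Finset V)
    (hP : LinearIndependent ℝ (fun p : P => (p : V)))
    (Supp : V → Set V)
    -- the elements of `Ψ` are nonzero nonnegative-integer combinations of `Π`, and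
    -- `Supp` is the set of simple roots occurring with nonzero coefficient
    (hPsi : ∀ α ∈ Psi, α ≠ 0 ∧ ∃ k : V → ℕ,
      α = ∑ δ ∈ P, (k δ : ℝ) • δ ∧ Supp α = {δ : V | δ ∈ P ∧ k δ ≠ 0})
    (τ : V →ₗ[ℝ] V')
    (π : V → V)
    (hπ : ∀ δ ∈ Psi, π δ ∈ Supp δ)
    (F : V → Finset V)
    -- for `γ ∈ Ψ`: `F γ ⊆ Ψ`, every `δ ∈ F γ` has `Supp δ ⊆ Supp γ`, `π` restricts to a
    -- bijection of `F γ` onto `Supp γ`, and `τ` is injective on `F γ`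
    (hF : ∀ γ ∈ Psi, ↑(F γ) ⊆ (Psi : Set V) ∧ (∀ δ ∈ F γ, Supp δ ⊆ Supp γ) ∧
      Set.BijOn π ↑(F γ) (Supp γ) ∧ Set.InjOn τ ↑(F γ))
    -- (a): elements of `Ψ` with pairwise distinct `τ`-images have linearly independent
    -- `τ`-images
    (ha : ∀ A : Finset V, ↑A ⊆ (Psi : Set V) → Set.InjOn τ ↑A →
      LinearIndependent ℝ (fun a : A => τ a))
    -- (b)
    (hb : ∀ δ₁ ∈ Psi, ∀ δ₂ ∈ Psi, π δ₁ = π δ₂ → τ δ₁ = τ δ₂) :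
    ∀ α ∈ Psi, ∀ β ∈ Psi, α ≠ β → τ α = τ β → π α = π β →
      ∃ α' ∈ F α, ∃ β' ∈ F β, τ α' = τ β' ∧ π α' ∉ Supp β ∧ π β' ∉ Supp α := by
  classical
  intro α hα β hβ hne hταβ hπαβ
  by_contra hcon
  push_neg at hcon
  obtain ⟨hα0, kα, hαsum, hαsupp⟩ := hPsi α hα
  obtain ⟨hβ0, kβ, hβsum, hβsupp⟩ := hPsi β hβ
  obtain ⟨hFαΨ, hFαsupp, hFαbij, hFατ⟩ := hF α hα
  obtain ⟨hFβΨ, hFβsupp, hFβbij, hFβτ⟩ := hF β hβ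
  set Sα : Finset V := P.filter (fun δ => kα δ ≠ 0) with hSαdef
  set Sβ : Finset V := P.filter (fun δ => kβ δ ≠ 0) with hSβdef
  have hSα : (Sα : Set V) = Supp α := by
    rw [hαsupp]; ext x; simp [hSαdef]
  have hSβ : (Sβ : Set V) = Supp β := by
    rw [hβsupp]; ext x; simp [hSβdef]
  set S : Finset V := Sα ∪ Sβ with hSdef
  have hS : (S : Set V) = Supp α ∪ Supp β := by
    rw [hSdef, Finset.coe_union, hSα, hSβ]
  set A : Finset V := (F α).filter (fun a => π a ∉ Supp β) ∪ F β with hAdef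
  have hmemA : ∀ a : V, a ∈ A ↔ (a ∈ F α ∧ π a ∉ Supp β) ∨ a ∈ F β := by
    intro a; simp [hAdef]
  have hAΨ : (A : Set V) ⊆ (Psi : Set V) := by
    intro a haA
    rcases (hmemA a).mp haA with ⟨haF, _⟩ | haF
    · exact hFαΨ haF
    · exact hFβΨ haF
  -- key: no `a ∈ F α` with `π a ∉ Supp β` can have the same `τ`-image as an element of `F β`
  have key : ∀ a ∈ F α, π a ∉ Supp β → ∀ b ∈ F β, τ a = τ b → False := by
    intro a haF hπa b hbF hab
    have hπb : π b ∈ Supp α := hcon a haF b hbF hab hπa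
    obtain ⟨a', ha'F, ha'π⟩ := hFαbij.surjOn hπb
    have ha'Ψ : a' ∈ Psi := hFαΨ ha'F
    have hbΨ : b ∈ Psi := hFβΨ hbF
    have hτa' : τ a' = τ b := hb a' ha'Ψ b hbΨ ha'π
    have haa : a' = a := hFατ ha'F haF (hτa'.trans hab.symm)
    apply hπa
    rw [← haa, ha'π]
    exact hFβbij.mapsTo hbF
  -- τ is injective on A
  have hτA : Set.InjOn τ ↑A := by
    intro a ha' b hb' hab
    rcases (hmemA a).mp ha' with ⟨haF, hπa⟩ | haF <;>
      rcases (hmemA b).mp hb' with ⟨hbF, hπb⟩ | hbF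
    · exact hFατ haF hbF hab
    · exact absurd hab (fun h => key a haF hπa b hbF h)
    · exact absurd hab.symm (fun h => key b hbF hπb a haF h)
    · exact hFβτ haF hbF hab
  -- π is injective on A
  have hπA : Set.InjOn π ↑A := by
    intro a ha' b hb' hab
    rcases (hmemA a).mp ha' with ⟨haF, hπa⟩ | haF <;>
      rcases (hmemA b).mp hb' with ⟨hbF, hπb⟩ | hbF
    · exact hFαbij.injOn haF hbF hab
    · exact absurd (hab ▸ hFβbij.mapsTo hbF) hπa
    · exact absurd (hab ▸ hFβbij.mapsTo haF) hπb
    · exact hFβbij.injOn haF hbF hab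
  -- the image of A under π is S
  have hAimg : A.image π = S := by
    apply Finset.coe_injective
    rw [Finset.coe_image, hS]
    apply Set.Subset.antisymm
    · rintro _ ⟨a, haA, rfl⟩
      rcases (hmemA a).mp haA with ⟨haF, _⟩ | haF
      · exact Or.inl (hFαbij.mapsTo haF)
      · exact Or.inr (hFβbij.mapsTo haF)
    · rintro x hx
      by_cases hxβ : x ∈ Supp β
      · obtain ⟨b, hbF, hbπ⟩ := hFβbij.surjOn hxβ
        exact ⟨b, (hmemA b).mpr (Or.inr hbF), hbπ⟩
      · rcases hx with hxα | hxβ'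
        · obtain ⟨a, haF, haπ⟩ := hFαbij.surjOn hxα
          exact ⟨a, (hmemA a).mpr (Or.inl ⟨haF, haπ ▸ hxβ⟩), haπ⟩
        · exact absurd hxβ' hxβ
  have hcard : A.card = S.card := by
    rw [← hAimg, Finset.card_image_of_injOn hπA]
  -- the coefficients of α - β
  have hSP : S ⊆ P :=
    Finset.union_subset (Finset.filter_subset _ _) (Finset.filter_subset _ _)
  have hsum : ∑ δ ∈ S, ((kα δ : ℝ) - (kβ δ : ℝ)) • δ = α - β := by
    have h1 : ∑ δ ∈ P, ((kα δ : ℝ) - (kβ δ : ℝ)) • δ = α - β := by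
      rw [hαsum, hβsum, ← Finset.sum_sub_distrib]
      exact Finset.sum_congr rfl fun δ _ => sub_smul _ _ _
    rw [← h1]
    apply Finset.sum_subset hSP
    intro δ hδP hδS
    have h0α : kα δ = 0 := by
      by_contra h
      exact hδS (Finset.mem_union_left _ (Finset.mem_filter.mpr ⟨hδP, h⟩))
    have h0β : kβ δ = 0 := by
      by_contra h
      exact hδS (Finset.mem_union_right _ (Finset.mem_filter.mpr ⟨hδP, h⟩))
    simp [h0α, h0β]
  have hδ₀ : ∃ δ₀ ∈ S, ((kα δ₀ : ℝ) - (kβ δ₀ : ℝ)) ≠ 0 := by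
    by_contra h
    push_neg at h
    have h0 : α - β = 0 := by
      rw [← hsum]
      exact Finset.sum_eq_zero fun δ hδ => by rw [h δ hδ, zero_smul]
    exact hne (sub_eq_zero.mp h0)
  obtain ⟨δ₀, hδ₀S, hc₀⟩ := hδ₀
  -- the τ-relation
  have hτ0 : ∑ δ ∈ S, ((kα δ : ℝ) - (kβ δ : ℝ)) • τ δ = 0 := by
    have h1 := congrArg τ hsum
    rw [map_sum] at h1
    simp only [map_smul] at h1
    rw [h1, map_sub, hταβ, sub_self]
  set W : Submodule ℝ V' := Submodule.span ℝ (τ '' ↑(S.erase δ₀)) with hWdef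
  have hδ₀W : τ δ₀ ∈ W := by
    have hsplit : ((kα δ₀ : ℝ) - (kβ δ₀ : ℝ)) • τ δ₀
        + ∑ δ ∈ S.erase δ₀, ((kα δ : ℝ) - (kβ δ : ℝ)) • τ δ = 0 := by
      rw [Finset.add_sum_erase S (fun δ => ((kα δ : ℝ) - (kβ δ : ℝ)) • τ δ) hδ₀S]
      exact hτ0
    have h2 : ((kα δ₀ : ℝ) - (kβ δ₀ : ℝ)) • τ δ₀
        = -∑ δ ∈ S.erase δ₀, ((kα δ : ℝ) - (kβ δ : ℝ)) • τ δ :=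
      eq_neg_of_add_eq_zero_left hsplit
    have hmem : (-∑ δ ∈ S.erase δ₀, ((kα δ : ℝ) - (kβ δ : ℝ)) • τ δ) ∈ W :=
      Submodule.neg_mem _ (Submodule.sum_mem _ fun δ hδ =>
        Submodule.smul_mem _ _ (Submodule.subset_span ⟨δ, hδ, rfl⟩))
    have h3 : τ δ₀ = ((kα δ₀ : ℝ) - (kβ δ₀ : ℝ))⁻¹
        • (((kα δ₀ : ℝ) - (kβ δ₀ : ℝ)) • τ δ₀) := by
      rw [smul_smul, inv_mul_cancel₀ hc₀, one_smul]
    rw [h3, h2]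
    exact Submodule.smul_mem _ _ hmem
  have hspan : Submodule.span ℝ (τ '' ↑S) ≤ W := by
    rw [Submodule.span_le]
    rintro _ ⟨δ, hδ, rfl⟩
    by_cases hδ0 : δ = δ₀
    · subst hδ0; exact hδ₀W
    · exact Submodule.subset_span ⟨δ, by simpa [Finset.mem_erase, hδ0] using hδ, rfl⟩
  -- every τ a, a ∈ A, lies in W
  have hmemW : ∀ a ∈ A, τ a ∈ W := by
    intro a haA
    have haΨ : a ∈ Psi := hAΨ haA
    obtain ⟨_, k, hksum, hksupp⟩ := hPsi a haΨ
    have hsuppa : Supp a ⊆ ↑S := by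
      rw [hS]
      rcases (hmemA a).mp haA with ⟨haF, _⟩ | haF
      · exact fun x hx => Or.inl (hFαsupp a haF hx)
      · exact fun x hx => Or.inr (hFβsupp a haF hx)
    apply hspan
    have hmem1 : a ∈ Submodule.span ℝ (↑S : Set V) := by
      rw [hksum]
      apply Submodule.sum_mem
      intro δ hδP
      by_cases h0 : k δ = 0
      · simp only [h0, Nat.cast_zero, zero_smul]
        exact Submodule.zero_mem _
      · exact Submodule.smul_mem _ _
          (Submodule.subset_span (hsuppa (by rw [hksupp]; exact ⟨hδP, h0⟩)))
    have hmem2 : τ a ∈ Submodule.map τ (Submodule.span ℝ (↑S : Set V)) :=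
      Submodule.mem_map_of_mem hmem1
    rwa [Submodule.map_span] at hmem2
  -- the contradiction
  have hli : LinearIndependent ℝ (fun a : A => τ a) := ha A hAΨ hτA
  have hfd : FiniteDimensional ℝ W :=
    FiniteDimensional.span_of_finite ℝ ((S.erase δ₀).finite_toSet.image τ)
  have hli' : LinearIndependent ℝ
      (fun a : A => (⟨τ a, hmemW a a.2⟩ : W)) := by
    apply LinearIndependent.of_comp W.subtype
    exact hli
  have h1 : Fintype.card A ≤ Module.finrank ℝ W := hli'.fintype_card_le_finrank
  have h2 : Module.finrank ℝ W ≤ ((S.erase δ₀).image τ).card := by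
    have hWeq : W = Submodule.span ℝ (↑((S.erase δ₀).image τ) : Set V') := by
      rw [Finset.coe_image]
    rw [hWeq]
    exact finrank_span_finset_le_card _
  have h3 : ((S.erase δ₀).image τ).card ≤ (S.erase δ₀).card := Finset.card_image_le
  have h4 : (S.erase δ₀).card < S.card := Finset.card_erase_lt_of_mem hδ₀S
  have h5 : Fintype.card A = A.card := Fintype.card_coe A
  omega
end

section
/- Let V be a finite-dimensional real vector space, Π ⊆ V a finite linearly independent set, Δ₊ a finite set of nonzero vectors each of which is a nonnegative-integer linear combination of Π, Ψ ⊆ Δ₊, V' a real vector space, and τ : V → V' a linear map. Call δ ∈ Ψ regular if every γ ∈ Ψ with τ(γ) = τ(δ) equals δ. Let s : V → V be a linear map such that: (1) s(γ) ∈ Δ₊ for every γ ∈ Δ₊ which is not a regular element of Ψ; (2) s(β) ∈ {β, −β} for every β ∈ Ψ; (3) for every α ∈ Ψ with α ∉ Π there exists α' ∈ Ψ with α − α' ∈ Δ₊ and α − α' ∉ Ψ. Then every α ∈ Ψ with s(α) = −α is a regular element of Ψ and lies in Π. -/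
lemma aux_coeffs_zero {V : Type*} [AddCommGroup V] [Module ℝ V]
    (P : Finset V) (hP : LinearIndependent ℝ (fun p : P => (p : V)))
    (c : V → ℝ) (h0 : ∑ δ ∈ P, c δ • δ = 0) : ∀ δ ∈ P, c δ = 0 := by
  have h := Fintype.linearIndependent_iff.mp hP (fun p => c p)
    (by rw [← h0]; exact Finset.sum_coe_sort P (fun δ => c δ • δ))
  intro δ hδ; exact h ⟨δ, hδ⟩

lemma aux_combo_zero {V : Type*} [AddCommGroup V] [Module ℝ V]
    (P : Finset V) (hP : LinearIndependent ℝ (fun p : P => (p : V)))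
    (ca cb : V → ℝ) (hca : ∀ δ ∈ P, 0 ≤ ca δ) (hcb : ∀ δ ∈ P, 0 ≤ cb δ)
    (a b : V) (ha : a = ∑ δ ∈ P, ca δ • δ) (hb : b = ∑ δ ∈ P, cb δ • δ)
    (hab : a + b = 0) : a = 0 := by
  have hsum : ∑ δ ∈ P, (ca δ + cb δ) • δ = 0 := by
    simpa [add_smul, Finset.sum_add_distrib, ha, hb] using hab
  have hz := aux_coeffs_zero P hP _ hsum
  have : ∀ δ ∈ P, ca δ = 0 := by
    intro δ hδ
    have := hz δ hδ
    nlinarith [hca δ hδ, hcb δ hδ]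
  rw [ha]
  exact Finset.sum_eq_zero (fun δ hδ => by rw [this δ hδ, zero_smul])

/-- Abstract version of Corollary 8: every `α ∈ Ψ` with `s α = −α` is a regular element
of `Ψ` and is a simple root. -/
theorem reflected_root_is_regular_simple
    {V V' : Type*} [AddCommGroup V] [Module ℝ V] [FiniteDimensional ℝ V]
    [AddCommGroup V'] [Module ℝ V']
    (P D Psi : Finset V)
    (hP : LinearIndependent ℝ (fun p : P => (p : V)))
    (hD : ∀ α ∈ D, α ≠ 0 ∧ ∃ k : V → ℕ, α = ∑ δ ∈ P, (k δ : ℝ) • δ)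
    (hPsiD : Psi ⊆ D)
    (τ : V →ₗ[ℝ] V')
    (s : V →ₗ[ℝ] V)
    -- (1): `s` maps every positive root that is not a regular element of `Ψ` to a
    -- positive root
    (h1 : ∀ γ ∈ D, ¬(γ ∈ Psi ∧ ∀ γ' ∈ Psi, τ γ' = τ γ → γ' = γ) → s γ ∈ D)
    -- (2)
    (h2 : ∀ β ∈ Psi, s β = β ∨ s β = -β)
    -- (3): every non-simple element of `Ψ` admits a suitable subordinate element
    (h3 : ∀ α ∈ Psi, α ∉ P → ∃ α' ∈ Psi, α - α' ∈ D ∧ α - α' ∉ Psi) :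
    ∀ α ∈ Psi, s α = -α → (∀ γ ∈ Psi, τ γ = τ α → γ = α) ∧ α ∈ P := by
  intro α hα hsα
  obtain ⟨hα0, kα, hkα⟩ := hD α (hPsiD hα)
  have hreg : ∀ γ ∈ Psi, τ γ = τ α → γ = α := by
    by_contra h
    have hsD : s α ∈ D := h1 α (hPsiD hα) (by tauto)
    rw [hsα] at hsD
    obtain ⟨_, kn, hkn⟩ := hD _ hsD
    exact hα0 (aux_combo_zero P hP (fun δ => (kα δ : ℝ)) (fun δ => (kn δ : ℝ))
      (fun δ _ => by positivity) (fun δ _ => by positivity) α (-α) hkα hkn (by abel))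
  refine ⟨hreg, ?_⟩
  by_contra hnP
  obtain ⟨α', hα', hβD, hβΨ⟩ := h3 α hα hnP
  obtain ⟨hα'0, kα', hkα'⟩ := hD α' (hPsiD hα')
  obtain ⟨hβ0, kβ, hkβ⟩ := hD _ hβD
  have hsβD : s (α - α') ∈ D := h1 _ hβD (fun h => hβΨ h.1)
  obtain ⟨hsβ0, ks, hks⟩ := hD _ hsβD
  have hsβ : s (α - α') = -α - s α' := by rw [map_sub, hsα]
  rcases h2 α' hα' with h | h
  · -- s α' = α', so s(α-α') + α + α' = 0
    rw [h] at hsβ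
    exact hα0 (aux_combo_zero P hP (fun δ => (kα δ : ℝ))
      (fun δ => (kα' δ : ℝ) + (ks δ : ℝ))
      (fun δ _ => by positivity) (fun δ _ => by exact add_nonneg (Nat.cast_nonneg _) (Nat.cast_nonneg _)) α (α' + s (α - α'))
      hkα (by rw [hks, hkα', ← Finset.sum_add_distrib]
              exact Finset.sum_congr rfl (fun δ _ => (add_smul _ _ _).symm))
      (by rw [hsβ]; abel))
  · -- s α' = -α', so s(α-α') = -(α-α')
    rw [h] at hsβ
    have : s (α - α') + (α - α') = 0 := by rw [hsβ]; abel
    exact hsβ0 (aux_combo_zero P hP (fun δ => (ks δ : ℝ)) (fun δ => (kβ δ : ℝ))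
      (fun δ _ => by positivity) (fun δ _ => by positivity) _ _ hks hkβ this)
end

section
/- Let X be a free ℤ-module with a finite basis Π. Let M be a finite subset of X such that each α ∈ M equals the sum Σ_{δ ∈ S_α} δ of the elements of some nonempty subset S_α ⊆ Π, and such that for every α ∈ M the set S_α is not contained in the union ⋃_{β ∈ M, β ≠ α} S_β. Then the submodule of X generated by M is primitive, i.e., the quotient X/⟨M⟩ is torsion-free. -/
/-!
Suppose `n • x = ∑ α ∈ M, f α • α` with `n ≠ 0`. Each `α ∈ M` has a basis vector `δ` of its
support lying in no other support, so the `δ`-coordinate of the right-hand side is `f α`, while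
that of the left-hand side is divisible by `n`. Hence `n` divides every `f α`, and since `X` is
torsion-free, `x = ∑ α ∈ M, (f α / n) • α` lies in the span.
-/

open Submodule

theorem Submodule.Quotient.eq_zero_of_smul_eq_zero {R X : Type*} [Ring R] [AddCommGroup X]
    [Module R X] {N : Submodule R X} (hN : ∀ (x : X) (n : R), n ≠ 0 → n • x ∈ N → x ∈ N)
    (y : X ⧸ N) {n : R} (hn : n ≠ 0) (hny : n • y = 0) : y = 0 := by
  obtain ⟨x, rfl⟩ := Quotient.mk_surjective N y
  rw [← Quotient.mk_smul, Quotient.mk_eq_zero] at hny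
  exact (Quotient.mk_eq_zero N).mpr (hN x n hn hny)

theorem mem_span_of_smul_eq_sum_of_dvd {X : Type*} [AddCommGroup X] [Module.IsTorsionFree ℤ X]
    {M : Finset X} {f : X → ℤ} {n : ℤ} (hn : n ≠ 0) (hdvd : ∀ α ∈ M, n ∣ f α) {x : X}
    (hx : n • x = ∑ α ∈ M, f α • α) : x ∈ span ℤ (M : Set X) := by
  have hsum : n • ∑ α ∈ M, (f α / n) • α = n • x := by
    rw [hx, Finset.smul_sum]
    refine Finset.sum_congr rfl fun α hα => ?_
    rw [smul_smul, Int.mul_ediv_cancel' (hdvd α hα)]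
  rw [← smul_right_injective X hn hsum]
  exact sum_smul_mem _ _ fun α hα => subset_span hα

theorem Module.Basis.repr_sum_self_apply {R X ι : Type*} [Semiring R] [AddCommMonoid X]
    [Module R X] (b : Module.Basis ι R X) (s : Finset ι) (δ : ι) [Decidable (δ ∈ s)] :
    b.repr (∑ i ∈ s, b i) δ = if δ ∈ s then 1 else 0 := by
  classical
  simp [Finsupp.finsetSum_apply, Finsupp.single_apply]

theorem Module.Basis.repr_sum_smul_apply_of_isolated {R X ι : Type*} [Semiring R]
    [AddCommMonoid X] [Module R X] (b : Module.Basis ι R X) {M : Finset X} (f : X → R)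
    {α : X} (hα : α ∈ M) {δ : ι} (hαδ : b.repr α δ = 1)
    (hβδ : ∀ β ∈ M, β ≠ α → b.repr β δ = 0) :
    b.repr (∑ β ∈ M, f β • β) δ = f α := by
  rw [map_sum, Finsupp.finsetSum_apply, Finset.sum_eq_single_of_mem α hα]
  · simp [hαδ]
  · intro β hβ hne
    simp [hβδ β hβ hne]

theorem span_of_supports_is_primitive_general
    {X : Type*} [AddCommGroup X] {ι : Type*}
    (b : Module.Basis ι ℤ X) (M : Finset X) (S : X → Finset ι)
    (hS : ∀ α ∈ M, (S α).Nonempty ∧ α = ∑ δ ∈ S α, b δ)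
    (hC : ∀ α ∈ M, ∃ δ ∈ S α, ∀ β ∈ M, β ≠ α → δ ∉ S β) :
    ∀ (y : X ⧸ Submodule.span ℤ (M : Set X)) (n : ℤ), n ≠ 0 → n • y = 0 → y = 0 := by
  classical
  have hrepr : ∀ β ∈ M, ∀ δ, b.repr β δ = if δ ∈ S β then 1 else 0 := fun β hβ δ => by
    conv_lhs => rw [(hS β hβ).2]
    exact b.repr_sum_self_apply _ _
  have := Module.Free.of_basis b
  refine fun y n hn => Submodule.Quotient.eq_zero_of_smul_eq_zero (fun x m hm hx => ?_) y hn
  obtain ⟨f, -, hf⟩ := mem_span_finset.mp hx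
  refine mem_span_of_smul_eq_sum_of_dvd hm (fun α hα => ?_) hf.symm
  obtain ⟨δ, hδα, hδβ⟩ := hC α hα
  have hcoord := b.repr_sum_smul_apply_of_isolated f hα (δ := δ) (by simp [hrepr α hα, hδα])
    fun β hβ hne => by simp [hrepr β hβ, hδβ β hβ hne]
  rw [hf, map_smul, Finsupp.smul_apply, smul_eq_mul] at hcoord
  exact ⟨_, hcoord.symm⟩

/-- Let `X` be a free `ℤ`-module with finite basis `Π`, and `M` a finite set of elements
each equal to the sum of the basis vectors in some nonempty subset `S α ⊆ Π`, such that no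
`S α` is contained in the union of the other supports. Then the submodule generated by `M`
is primitive: the quotient `X/⟨M⟩` is torsion-free. -/
theorem span_of_supports_is_primitive
    {X : Type*} [AddCommGroup X] {ι : Type*} [Fintype ι]
    (b : Module.Basis ι ℤ X) (M : Finset X) (S : X → Finset ι)
    (hS : ∀ α ∈ M, (S α).Nonempty ∧ α = ∑ δ ∈ S α, b δ)
    (hC : ∀ α ∈ M, ∃ δ ∈ S α, ∀ β ∈ M, β ≠ α → δ ∉ S β) :
    ∀ (y : X ⧸ Submodule.span ℤ (M : Set X)) (n : ℤ), n ≠ 0 → n • y = 0 → y = 0 :=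
  span_of_supports_is_primitive_general b M S hS hC
end
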